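/- arXiv:2006.08139 — 3 statements merged into one kernel-verified Lean document; each statement's English description precedes it below -/
import Mathlib

section
/- With g, g_j, E_j, E^0_{j,x}, E^1_{j,x} as in the construction, for all sufficiently large j and every x ∈ E_j, the one-dimensional Lebesgue measures satisfy c·2^{-j} ≤ |E^1_{j,x}| ≤ |E^0_{j,x}| ≤ C·2^{-j} for absolute constants c, C > 0 (depending only on n, p). -/
open MeasureTheory Filter Set Metric
open scoped ENNReal Topology

set_option maxHeartbeats 2000000 in
/-- For large `j` and `x ∈ E_j`, the one-dimensional Lebesgue measures of the sets
`E¹_{j,x} ⊆ E⁰_{j,x}` are comparable to `2^{-j}`: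
`c·2^{-j} ≤ |E¹_{j,x}| ≤ |E⁰_{j,x}| ≤ C·2^{-j}`. -/
theorem stmt8 (n : ℕ) (hn : 0 < n) (p θ : ℝ) (hp : 0 < p) (hp1 : p < 1)
    (hθ : θ = (1 - p) / 2)
    (e0 : EuclideanSpace ℝ (Fin n)) (he0 : e0 = EuclideanSpace.single ⟨0, hn⟩ 1)
    (E : ℕ → Set (EuclideanSpace ℝ (Fin n)))
    (hE : E = fun (j : ℕ) => ⋃ a ∈ Set.Icc
        (((2:ℝ)^j + 2) * (1 - (2:ℝ) ^ (-θ * (j:ℝ))) + 1)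
        (((2:ℝ)^j - 2) * (1 + (2:ℝ) ^ (-θ * (j:ℝ))) - 1),
      Metric.ball (a • e0) (1/2))
    (g : EuclideanSpace ℝ (Fin n) → ℝ)
    (hg_nonneg : ∀ x, 0 ≤ g x) (hg_smooth : ContDiff ℝ (⊤ : ℕ∞) g)
    (hg_supp : tsupport g ⊆ Metric.ball 0 2)
    (hg_one : ∀ x ∈ Metric.ball (0 : EuclideanSpace ℝ (Fin n)) 1, g x = 1)
    (gj : ℕ → EuclideanSpace ℝ (Fin n) → ℝ)
    (hgj : gj = fun (j : ℕ) x => g (x - (2:ℝ)^j • e0))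
    (E0 E1 : ℕ → EuclideanSpace ℝ (Fin n) → Set ℝ)
    (hE0 : E0 = fun j x => {r : ℝ | 0 < r ∧ gj j (r⁻¹ • x) ≠ 0})
    (hE1 : E1 = fun j x => {r : ℝ | 0 < r ∧ gj j (r⁻¹ • x) = 1}) :
    ∃ c C : ℝ, 0 < c ∧ 0 < C ∧ ∀ᶠ (j : ℕ) in atTop, ∀ x ∈ E j,
      ENNReal.ofReal (c * (2:ℝ) ^ (-(j:ℝ))) ≤ volume (E1 j x) ∧
      volume (E1 j x) ≤ volume (E0 j x) ∧
      volume (E0 j x) ≤ ENNReal.ofReal (C * (2:ℝ) ^ (-(j:ℝ))) := by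
  subst hE hgj hE0 hE1
  have hθpos : 0 < θ := by rw [hθ]; linarith
  have he0norm : ‖e0‖ = 1 := by rw [he0]; simp [EuclideanSpace.norm_single]
  refine ⟨1/10, 10, by norm_num, by norm_num, ?_⟩
  -- 2^(-θ j) → 0
  have htend : Tendsto (fun j : ℕ => (2:ℝ) ^ (-θ * (j:ℝ))) atTop (𝓝 0) := by
    have heq : ∀ j : ℕ, (2:ℝ) ^ (-θ * (j:ℝ)) = ((2:ℝ) ^ (-θ)) ^ j := by
      intro j
      rw [← Real.rpow_natCast ((2:ℝ) ^ (-θ)) j, ← Real.rpow_mul (by norm_num)]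
    simp_rw [heq]
    exact tendsto_pow_atTop_nhds_zero_of_lt_one (Real.rpow_nonneg (by norm_num) _)
      (Real.rpow_lt_one_of_one_lt_of_neg (by norm_num) (by linarith))
  filter_upwards [htend.eventually_lt_const (show (0:ℝ) < 1/8 by norm_num),
    eventually_ge_atTop 3] with j hs8 hj3 x hx
  set t : ℝ := (2:ℝ)^j with htdef
  set s : ℝ := (2:ℝ) ^ (-θ * (j:ℝ)) with hsdef
  have hspos : 0 < s := Real.rpow_pos_of_pos (by norm_num) _
  have ht8 : (8:ℝ) ≤ t := by
    calc (8:ℝ) = 2^3 := by norm_num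
    _ ≤ 2^j := by exact pow_le_pow_right₀ (by norm_num) hj3
  have htpos : (0:ℝ) < t := by linarith
  -- extract a with x ∈ ball (a • e0) (1/2)
  simp only [mem_iUnion, mem_ball, exists_prop] at hx
  obtain ⟨a, ha, hxa⟩ := hx
  have hxa' : ‖x - a • e0‖ < 1/2 := by rwa [dist_eq_norm] at hxa
  have ha1 : ((t + 2) * (1 - s) + 1) ≤ a := ha.1
  have ha2 : a ≤ ((t - 2) * (1 + s) - 1) := ha.2
  have halo : (7/8) * t ≤ a := by
    nlinarith [mul_pos (show (0:ℝ) < t + 2 by linarith) (show (0:ℝ) < 1/8 - s by linarith)]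
  have hahi : a ≤ (9/8) * t := by
    nlinarith [mul_pos (show (0:ℝ) < t - 2 by linarith) (show (0:ℝ) < 1/8 - s by linarith)]
  have hapos : 0 < a := by linarith
  have hae : ‖a • e0‖ = a := by rw [norm_smul, he0norm, mul_one, Real.norm_eq_abs, abs_of_pos hapos]
  have habs := abs_norm_sub_norm_le x (a • e0)
  rw [hae, abs_le] at habs
  have hnx1 : a - 1/2 ≤ ‖x‖ := by linarith [habs.1, hxa'.le]
  have hnx2 : ‖x‖ ≤ a + 1/2 := by linarith [habs.2, hxa'.le]
  have hnxpos : 0 < ‖x‖ := by linarith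
  have hte : ‖t • e0‖ = t := by rw [norm_smul, he0norm, mul_one, Real.norm_eq_abs, abs_of_pos htpos]
  -- E1 ⊆ E0
  have hsub10 : {r : ℝ | 0 < r ∧ g (r⁻¹ • x - (2:ℝ)^j • e0) = 1} ⊆
      {r : ℝ | 0 < r ∧ g (r⁻¹ • x - (2:ℝ)^j • e0) ≠ 0} := by
    intro r hr
    exact ⟨hr.1, by rw [hr.2]; norm_num⟩
  -- E0 ⊆ Ioo
  have hsub0 : {r : ℝ | 0 < r ∧ g (r⁻¹ • x - (2:ℝ)^j • e0) ≠ 0} ⊆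
      Ioo (‖x‖ / (t + 2)) (‖x‖ / (t - 2)) := by
    intro r ⟨hrpos, hrne⟩
    have hmem : r⁻¹ • x - (2:ℝ)^j • e0 ∈ Metric.ball (0 : EuclideanSpace ℝ (Fin n)) 2 :=
      hg_supp (subset_tsupport g hrne)
    rw [mem_ball_zero_iff] at hmem
    have hninv : ‖r⁻¹ • x‖ = ‖x‖ / r := by
      rw [norm_smul, norm_inv, Real.norm_eq_abs, abs_of_pos hrpos, inv_mul_eq_div]
    have habs2 := abs_norm_sub_norm_le (r⁻¹ • x) (t • e0)
    have : |‖x‖ / r - t| < 2 := by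
      rw [hninv, hte] at habs2
      calc |‖x‖ / r - t| ≤ ‖r⁻¹ • x - t • e0‖ := habs2
      _ < 2 := hmem
    rw [abs_lt] at this
    have h2 : ‖x‖ / r < t + 2 := by linarith [this.2]
    have h1 : t - 2 < ‖x‖ / r := by linarith [this.1]
    rw [div_lt_iff₀ hrpos] at h2
    rw [lt_div_iff₀ hrpos] at h1
    constructor
    · rw [div_lt_iff₀ (by linarith : (0:ℝ) < t + 2)]
      linarith
    · rw [lt_div_iff₀ (by linarith : (0:ℝ) < t - 2)]
      linarith
  -- Icc ⊆ E1
  have hsub1 : Icc (a / (t + 1/4)) (a / (t - 1/4)) ⊆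
      {r : ℝ | 0 < r ∧ g (r⁻¹ • x - (2:ℝ)^j • e0) = 1} := by
    intro r ⟨hr1, hr2⟩
    have hr7 : 7/10 ≤ r := by
      refine le_trans ?_ hr1
      rw [le_div_iff₀ (by linarith : (0:ℝ) < t + 1/4)]
      linarith
    have hrpos : 0 < r := by linarith
    have hfar1 : a / r ≤ t + 1/4 := by
      have h := (div_le_iff₀ (show (0:ℝ) < t + 1/4 by linarith)).mp hr1
      rw [div_le_iff₀ hrpos]
      linarith
    have hfar2 : t - 1/4 ≤ a / r := by
      have h := (le_div_iff₀ (show (0:ℝ) < t - 1/4 by linarith)).mp hr2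
      rw [le_div_iff₀ hrpos]
      linarith
    have hdecomp : r⁻¹ • x - t • e0 = (r⁻¹ * a - t) • e0 + r⁻¹ • (x - a • e0) := by
      module
    have hnorm : ‖r⁻¹ • x - t • e0‖ < 1 := by
      rw [hdecomp]
      have h1 : ‖(r⁻¹ * a - t) • e0‖ ≤ 1/4 := by
        rw [norm_smul, he0norm, mul_one, Real.norm_eq_abs, abs_le]
        rw [inv_mul_eq_div]
        constructor <;> linarith
      have h2 : ‖r⁻¹ • (x - a • e0)‖ < 5/7 := by
        rw [norm_smul, norm_inv, Real.norm_eq_abs, abs_of_pos hrpos]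
        have : r⁻¹ ≤ 10/7 := by
          rw [inv_le_comm₀ (by linarith) (by norm_num)]
          linarith
        calc r⁻¹ * ‖x - a • e0‖ < r⁻¹ * (1/2) := by
              exact mul_lt_mul_of_pos_left hxa' (inv_pos.mpr hrpos)
        _ ≤ (10/7) * (1/2) := by nlinarith
        _ = 5/7 := by norm_num
      calc ‖(r⁻¹ * a - t) • e0 + r⁻¹ • (x - a • e0)‖
          ≤ ‖(r⁻¹ * a - t) • e0‖ + ‖r⁻¹ • (x - a • e0)‖ := norm_add_le _ _
      _ < 1 := by linarith
    exact ⟨hrpos, hg_one _ (mem_ball_zero_iff.mpr hnorm)⟩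
  -- measure computations
  have hIccle : a / (t + 1/4) ≤ a / (t - 1/4) := by
    apply div_le_div_of_nonneg_left hapos.le (by linarith) (by linarith)
  have hrw : (2:ℝ) ^ (-(j:ℝ)) = t⁻¹ := by
    rw [Real.rpow_neg (by norm_num), Real.rpow_natCast]
  refine ⟨?_, measure_mono hsub10, ?_⟩
  · calc ENNReal.ofReal (1/10 * (2:ℝ) ^ (-(j:ℝ)))
        ≤ ENNReal.ofReal (a / (t - 1/4) - a / (t + 1/4)) := by
          apply ENNReal.ofReal_le_ofReal
          rw [hrw]
          have hkey : a / (t - 1/4) - a / (t + 1/4) = a * (1/2) / ((t - 1/4) * (t + 1/4)) := by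
            rw [div_sub_div a a (by linarith : t - 1/4 ≠ 0) (by linarith : t + 1/4 ≠ 0)]
            congr 1
            ring
          rw [hkey, le_div_iff₀ (by nlinarith : (0:ℝ) < (t - 1/4) * (t + 1/4))]
          have h1 : t⁻¹ * t = 1 := inv_mul_cancel₀ (ne_of_gt htpos)
          have : 1/10 * t⁻¹ * ((t - 1/4) * (t + 1/4)) = t/10 - t⁻¹/160 := by
            linear_combination (t/10) * h1
          rw [this]
          have hinvpos : 0 < t⁻¹ := inv_pos.mpr htpos
          nlinarith
    _ = volume (Icc (a / (t + 1/4)) (a / (t - 1/4))) := by rw [Real.volume_Icc]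
    _ ≤ volume {r : ℝ | 0 < r ∧ g (r⁻¹ • x - (2:ℝ)^j • e0) = 1} := measure_mono hsub1
  · calc volume {r : ℝ | 0 < r ∧ g (r⁻¹ • x - (2:ℝ)^j • e0) ≠ 0}
        ≤ volume (Ioo (‖x‖ / (t + 2)) (‖x‖ / (t - 2))) := measure_mono hsub0
    _ = ENNReal.ofReal (‖x‖ / (t - 2) - ‖x‖ / (t + 2)) := by rw [Real.volume_Ioo]
    _ ≤ ENNReal.ofReal (10 * (2:ℝ) ^ (-(j:ℝ))) := by
          apply ENNReal.ofReal_le_ofReal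
          rw [hrw]
          have hkey : ‖x‖ / (t - 2) - ‖x‖ / (t + 2) = ‖x‖ * 4 / ((t - 2) * (t + 2)) := by
            rw [div_sub_div ‖x‖ ‖x‖ (by linarith : t - 2 ≠ 0) (by linarith : t + 2 ≠ 0)]
            congr 1
            ring
          rw [hkey, div_le_iff₀ (by nlinarith : (0:ℝ) < (t - 2) * (t + 2))]
          have h1 : t⁻¹ * t = 1 := inv_mul_cancel₀ (ne_of_gt htpos)
          have : 10 * t⁻¹ * ((t - 2) * (t + 2)) = 10 * t - 40 * t⁻¹ := by
            linear_combination (10*t) * h1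
          rw [this]
          have hinvle : t⁻¹ ≤ (8:ℝ)⁻¹ := by
            apply inv_anti₀ (by norm_num) ht8
          nlinarith
end

section
/- With the notation of the construction (0 < p < 1, θ = (1-p)/2, g_j, E_j, E^1_{j,x}), define the main term H^M g_j(x) := ∫_0^∞ g_j(x/r) dr. Then for all sufficiently large j: H^M g_j(x) ≥ |E^1_{j,x}| ≳ 2^{-j} for every x ∈ E_j, and consequently ‖H^M g_j‖_{L^p(E_j)}^p ≥ c · 2^{(1-p)j/2} for a constant c > 0 independent of j. -/
open MeasureTheory Filter Set Metric
open scoped ENNReal Topology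

set_option maxHeartbeats 1000000 in
/-- Lower bound for the main term `H^M g_j(x) = ∫_0^∞ g_j(x/r) dr`: for large `j`,
`H^M g_j(x) ≥ |E¹_{j,x}| ≳ 2^{-j}` on `E_j`, and hence
`‖H^M g_j‖_{L^p(E_j)}^p ≥ c · 2^{(1-p)j/2}`. -/
theorem stmt10 (n : ℕ) (hn : 0 < n) (p θ : ℝ) (hp : 0 < p) (hp1 : p < 1)
    (hθ : θ = (1 - p) / 2)
    (e0 : EuclideanSpace ℝ (Fin n)) (he0 : e0 = EuclideanSpace.single ⟨0, hn⟩ 1)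
    (E : ℕ → Set (EuclideanSpace ℝ (Fin n)))
    (hE : E = fun (j : ℕ) => ⋃ a ∈ Set.Icc
        (((2:ℝ)^j + 2) * (1 - (2:ℝ) ^ (-θ * (j:ℝ))) + 1)
        (((2:ℝ)^j - 2) * (1 + (2:ℝ) ^ (-θ * (j:ℝ))) - 1),
      Metric.ball (a • e0) (1/2))
    (g : EuclideanSpace ℝ (Fin n) → ℝ)
    (hg_nonneg : ∀ x, 0 ≤ g x) (hg_smooth : ContDiff ℝ (⊤ : ℕ∞) g)
    (hg_supp : tsupport g ⊆ Metric.ball 0 2)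
    (hg_one : ∀ x ∈ Metric.ball (0 : EuclideanSpace ℝ (Fin n)) 1, g x = 1)
    (gj : ℕ → EuclideanSpace ℝ (Fin n) → ℝ)
    (hgj : gj = fun (j : ℕ) x => g (x - (2:ℝ)^j • e0))
    (E1 : ℕ → EuclideanSpace ℝ (Fin n) → Set ℝ)
    (hE1 : E1 = fun j x => {r : ℝ | 0 < r ∧ gj j (r⁻¹ • x) = 1})
    (HM : ℕ → EuclideanSpace ℝ (Fin n) → ℝ)
    (hHM : HM = fun j x => ∫ r in Set.Ioi (0:ℝ), gj j (r⁻¹ • x)) :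
    ∃ c : ℝ, 0 < c ∧ ∀ᶠ (j : ℕ) in atTop,
      (∀ x ∈ E j, (volume (E1 j x)).toReal ≤ HM j x ∧ c * (2:ℝ) ^ (-(j:ℝ)) ≤ HM j x) ∧
      ENNReal.ofReal (c * (2:ℝ) ^ ((1 - p) * (j:ℝ) / 2)) ≤
        ∫⁻ x in E j, ENNReal.ofReal (HM j x ^ p) := by
  subst hE hgj hE1 hHM
  beta_reduce
  have hθpos : 0 < θ := by rw [hθ]; linarith
  have h1mθ : 0 < 1 - θ := by rw [hθ]; linarith
  have hn1 : ‖e0‖ = 1 := by rw [he0, EuclideanSpace.norm_single]; norm_num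
  have hg_cont : Continuous g := hg_smooth.continuous
  have hg_cs : HasCompactSupport g :=
    Metric.isCompact_of_isClosed_isBounded (isClosed_tsupport g)
      (Metric.isBounded_ball.subset hg_supp)
  obtain ⟨C, hC⟩ := hg_cs.exists_bound_of_continuous hg_cont
  set v : ℝ≥0∞ := volume (ball (0:EuclideanSpace ℝ (Fin n)) (1/2)) with hv
  have hvpos : 0 < v := measure_ball_pos volume _ (by norm_num)
  have hvfin : v ≠ ∞ := measure_ball_lt_top.ne
  have hvR : 0 < v.toReal := ENNReal.toReal_pos hvpos.ne' hvfin
  have h16p : (0:ℝ) < (16:ℝ)⁻¹ ^ p := Real.rpow_pos_of_pos (by norm_num) p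
  refine ⟨min (16:ℝ)⁻¹ ((16:ℝ)⁻¹ ^ p * v.toReal), lt_min (by norm_num) (by positivity), ?_⟩
  set c := min (16:ℝ)⁻¹ ((16:ℝ)⁻¹ ^ p * v.toReal) with hc
  -- eventual hypotheses
  have hev1 : ∀ᶠ j : ℕ in atTop, (2:ℝ) ^ (-θ * (j:ℝ)) ≤ 1/4 := by
    rw [eventually_atTop]
    refine ⟨⌈2/θ⌉₊, fun j hj => ?_⟩
    have h1 : (2/θ : ℝ) ≤ j := le_trans (Nat.le_ceil _) (by exact_mod_cast hj)
    rw [div_le_iff₀ hθpos] at h1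
    calc (2:ℝ) ^ (-θ*(j:ℝ)) ≤ (2:ℝ) ^ (-2:ℝ) :=
          Real.rpow_le_rpow_of_exponent_le one_le_two (by nlinarith)
      _ = 1/4 := by
          rw [show (-2:ℝ) = ((-2:ℤ):ℝ) by norm_num, Real.rpow_intCast]; norm_num
  have hev2 : ∀ᶠ j : ℕ in atTop, (8:ℝ) ≤ (2:ℝ) ^ ((1-θ) * (j:ℝ)) := by
    rw [eventually_atTop]
    refine ⟨⌈3/(1-θ)⌉₊, fun j hj => ?_⟩
    have h1 : (3/(1-θ) : ℝ) ≤ j := le_trans (Nat.le_ceil _) (by exact_mod_cast hj)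
    rw [div_le_iff₀ h1mθ] at h1
    calc (8:ℝ) = (2:ℝ) ^ (3:ℝ) := by
          rw [show (3:ℝ) = ((3:ℕ):ℝ) by norm_num, Real.rpow_natCast]; norm_num
      _ ≤ (2:ℝ) ^ ((1-θ)*(j:ℝ)) :=
          Real.rpow_le_rpow_of_exponent_le one_le_two (by nlinarith)
  have hev3 : ∀ᶠ j : ℕ in atTop, (4:ℝ) ≤ (2:ℝ)^(j:ℕ) := by
    rw [eventually_atTop]
    refine ⟨2, fun j hj => ?_⟩
    calc (4:ℝ) = 2^(2:ℕ) := by norm_num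
      _ ≤ 2^j := pow_le_pow_right₀ one_le_two hj
  filter_upwards [hev1, hev2, hev3] with j hε4 hD8 hT4
  set T := (2:ℝ)^(j:ℕ) with hTdef
  set ε := (2:ℝ)^(-θ*(j:ℝ)) with hεdef
  have hTpos : (0:ℝ) < T := by linarith
  have hεpos : 0 < ε := Real.rpow_pos_of_pos two_pos _
  have hTr : T = (2:ℝ)^((j:ℝ)) := by rw [hTdef, Real.rpow_natCast]
  have hTinv : T⁻¹ = (2:ℝ)^(-(j:ℝ)) := by
    rw [hTr, ← Real.rpow_neg (by norm_num)]
  have hTε : T * ε = (2:ℝ)^((1-θ)*(j:ℝ)) := by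
    rw [hTr, hεdef, ← Real.rpow_add two_pos]
    congr 1; ring
  have hD8' : (8:ℝ) ≤ T * ε := by rw [hTε]; exact hD8
  set A := (T+2)*(1-ε)+1 with hAdef
  set B := (T-2)*(1+ε)-1 with hBdef
  have hA_lb : 3/4*T ≤ A := by rw [hAdef]; nlinarith
  have hA3 : (3:ℝ) ≤ A := by linarith
  have hBA : B - A = 2*(T*ε) - 6 := by rw [hAdef, hBdef]; ring
  -- the key pointwise estimate
  have key : ∀ x ∈ ⋃ a ∈ Icc A B, ball (a • e0) (1/2),
      (volume {r : ℝ | 0 < r ∧ g (r⁻¹ • x - T • e0) = 1}).toReal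
        ≤ (∫ r in Ioi (0:ℝ), g (r⁻¹ • x - T • e0))
      ∧ (16:ℝ)⁻¹ * T⁻¹ ≤ (volume {r : ℝ | 0 < r ∧ g (r⁻¹ • x - T • e0) = 1}).toReal := by
    intro x hx
    simp only [Set.mem_iUnion, Set.mem_Icc, exists_prop] at hx
    obtain ⟨a, ⟨haA, haB⟩, hxb⟩ := hx
    have hapos : (0:ℝ) < a := by linarith
    have hxa : ‖x - a • e0‖ < 1/2 := mem_ball_iff_norm.1 hxb
    set S := {r : ℝ | 0 < r ∧ g (r⁻¹ • x - T • e0) = 1} with hSdef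
    have hmeasf : Measurable (fun r : ℝ => g (r⁻¹ • x - T • e0)) :=
      hg_cont.measurable.comp ((measurable_inv.smul_const x).sub_const _)
    have hS_meas : MeasurableSet S := by
      have hSeq : S = Ioi 0 ∩ (fun r : ℝ => g (r⁻¹ • x - T • e0)) ⁻¹' {1} := by
        ext r; simp [hSdef, Set.mem_setOf_eq, Set.mem_Ioi]
      rw [hSeq]
      exact measurableSet_Ioi.inter (hmeasf (measurableSet_singleton 1))
    -- support control
    have hsupp : ∀ r : ℝ, 0 < r → g (r⁻¹ • x - T • e0) ≠ 0 →
        r ∈ Icc (‖x‖/(T+2)) (‖x‖/(T-2)) := by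
      intro r hr hne
      have hmem : r⁻¹ • x - T • e0 ∈ ball (0:EuclideanSpace ℝ (Fin n)) 2 :=
        hg_supp (subset_tsupport _ (Function.mem_support.2 hne))
      rw [mem_ball_zero_iff] at hmem
      have hTnorm : ‖T • e0‖ = T := by
        rw [norm_smul, hn1, mul_one, Real.norm_eq_abs, abs_of_pos hTpos]
      have hnx : ‖r⁻¹ • x‖ = ‖x‖/r := by
        rw [norm_smul, norm_inv, Real.norm_eq_abs, abs_of_pos hr]
        ring
      have ht1 : ‖r⁻¹ • x‖ - ‖T • e0‖ ≤ ‖r⁻¹ • x - T • e0‖ := norm_sub_norm_le _ _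
      have ht2 : ‖T • e0‖ - ‖r⁻¹ • x‖ ≤ ‖r⁻¹ • x - T • e0‖ := by
        rw [norm_sub_rev]; exact norm_sub_norm_le _ _
      rw [hTnorm, hnx] at ht1 ht2
      have hub : ‖x‖/r < T + 2 := by linarith
      have hlb : T - 2 < ‖x‖/r := by linarith
      constructor
      · rw [div_le_iff₀ (by linarith : (0:ℝ) < T + 2)]
        rw [div_lt_iff₀ hr] at hub
        linarith
      · rw [le_div_iff₀ (by linarith : (0:ℝ) < T - 2)]
        rw [lt_div_iff₀ hr] at hlb
        linarith
    have hS_subIoi : S ⊆ Ioi (0:ℝ) := fun r hr => hr.1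
    have hS_sub : S ⊆ Icc (‖x‖/(T+2)) (‖x‖/(T-2)) := fun r hr =>
      hsupp r hr.1 (by rw [hr.2]; norm_num)
    have hS_fin : volume S ≠ ∞ :=
      (lt_of_le_of_lt (measure_mono hS_sub) measure_Icc_lt_top).ne
    -- the interval inside S
    have hI_sub : Icc (a/(T+4⁻¹)) (a/T) ⊆ S := by
      rintro r ⟨hr1, hr2⟩
      have hT4pos : (0:ℝ) < T + 4⁻¹ := by linarith
      have hrpos : 0 < r := lt_of_lt_of_le (by positivity) hr1
      refine ⟨hrpos, hg_one _ ?_⟩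
      rw [mem_ball_zero_iff]
      have hval : r⁻¹ • x - T • e0 = (r⁻¹*a - T) • e0 + r⁻¹ • (x - a • e0) := by
        module
      rw [hval]
      have h1 : ‖(r⁻¹*a - T) • e0‖ = |r⁻¹*a - T| := by
        rw [norm_smul, hn1, mul_one, Real.norm_eq_abs]
      have h2 : ‖r⁻¹ • (x - a • e0)‖ = r⁻¹ * ‖x - a • e0‖ := by
        rw [norm_smul, norm_inv, Real.norm_eq_abs, abs_of_pos hrpos]
      have hbound1 : T ≤ r⁻¹ * a := by
        rw [le_div_iff₀ hTpos] at hr2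
        rw [show r⁻¹ * a = a / r by ring, le_div_iff₀ hrpos]
        linarith
      have hbound2 : r⁻¹ * a ≤ T + 4⁻¹ := by
        rw [div_le_iff₀ hT4pos] at hr1
        rw [show r⁻¹ * a = a / r by ring, div_le_iff₀ hrpos]
        linarith
      have hr23 : (2/3:ℝ) ≤ r := by
        refine le_trans ?_ hr1
        rw [le_div_iff₀ hT4pos]
        nlinarith
      have hrinv : r⁻¹ ≤ 3/2 := by
        have : r⁻¹ ≤ (2/3:ℝ)⁻¹ := by
          apply inv_anti₀ (by norm_num) hr23
        linarith [this]
      calc ‖(r⁻¹*a - T) • e0 + r⁻¹ • (x - a • e0)‖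
          ≤ ‖(r⁻¹*a - T) • e0‖ + ‖r⁻¹ • (x - a • e0)‖ := norm_add_le _ _
        _ < 1 := by
            rw [h1, h2]
            have habs : |r⁻¹*a - T| ≤ 4⁻¹ := abs_le.2 ⟨by linarith, by linarith⟩
            have hrnn : (0:ℝ) ≤ r⁻¹ := by positivity
            nlinarith [norm_nonneg (x - a • e0)]
    -- integrability
    have hf_int : IntegrableOn (fun r : ℝ => g (r⁻¹ • x - T • e0)) (Ioi 0) := by
      refine Integrable.mono'
        (g := (Icc (‖x‖/(T+2)) (‖x‖/(T-2))).indicator fun _ => C)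
        (((integrable_indicator_iff measurableSet_Icc).2
          (integrableOn_const measure_Icc_lt_top.ne)).restrict)
        hmeasf.aestronglyMeasurable ?_
      refine (ae_restrict_iff' measurableSet_Ioi).2 (Filter.Eventually.of_forall ?_)
      intro r hr
      by_cases hmem : r ∈ Icc (‖x‖/(T+2)) (‖x‖/(T-2))
      · rw [indicator_of_mem hmem]; exact hC _
      · rw [indicator_of_notMem hmem]
        have hz : g (r⁻¹ • x - T • e0) = 0 := by
          by_contra h
          exact hmem (hsupp r hr h)
        rw [hz]; simp
    have hind_int : IntegrableOn (S.indicator fun _ => (1:ℝ)) (Ioi 0) :=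
      ((integrable_indicator_iff hS_meas).2
        (integrableOn_const hS_fin)).integrableOn
    -- first inequality
    have h1 : (volume S).toReal ≤ ∫ r in Ioi (0:ℝ), g (r⁻¹ • x - T • e0) := by
      have hmono := setIntegral_mono_on hind_int hf_int measurableSet_Ioi ?_
      · rwa [setIntegral_indicator hS_meas, inter_eq_self_of_subset_right hS_subIoi,
          setIntegral_const, smul_eq_mul, mul_one] at hmono
      · intro r _
        by_cases hmem : r ∈ S
        · rw [indicator_of_mem hmem]; exact le_of_eq hmem.2.symm
        · rw [indicator_of_notMem hmem]; exact hg_nonneg _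
    -- second inequality
    have h2 : (16:ℝ)⁻¹ * T⁻¹ ≤ (volume S).toReal := by
      have hT4pos : (0:ℝ) < T + 4⁻¹ := by linarith
      have hle : a/(T+4⁻¹) ≤ a/T :=
        div_le_div_of_nonneg_left hapos.le hTpos (by linarith)
      have hIvol : (volume (Icc (a/(T+4⁻¹)) (a/T))).toReal = a/T - a/(T+4⁻¹) := by
        rw [Real.volume_Icc, ENNReal.toReal_ofReal (by linarith)]
      have harith : (16:ℝ)⁻¹ * T⁻¹ ≤ a/T - a/(T+4⁻¹) := by
        have h0 : a/T - a/(T+4⁻¹) = (a*4⁻¹)/(T*(T+4⁻¹)) := by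
          field_simp
          ring
        rw [h0, show (16:ℝ)⁻¹ * T⁻¹ = (16:ℝ)⁻¹*(T+4⁻¹) / (T*(T+4⁻¹)) by
          field_simp]
        apply div_le_div_of_nonneg_right ?_ (by positivity)
        · nlinarith
      calc (16:ℝ)⁻¹ * T⁻¹ ≤ a/T - a/(T+4⁻¹) := harith
        _ = (volume (Icc (a/(T+4⁻¹)) (a/T))).toReal := hIvol.symm
        _ ≤ (volume S).toReal := ENNReal.toReal_mono hS_fin (measure_mono hI_sub)
    exact ⟨h1, h2⟩
  constructor
  · intro x hx
    obtain ⟨hk1, hk2⟩ := key x hx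
    refine ⟨hk1, ?_⟩
    calc c * (2:ℝ)^(-(j:ℝ)) ≤ (16:ℝ)⁻¹ * T⁻¹ := by
          rw [← hTinv]
          exact mul_le_mul_of_nonneg_right (min_le_left _ _) (by positivity)
      _ ≤ (volume {r : ℝ | 0 < r ∧ g (r⁻¹ • x - T • e0) = 1}).toReal := hk2
      _ ≤ _ := hk1
  · -- the integral lower bound
    set N := ⌊B - A⌋₊ with hNdef
    have hBApos : (0:ℝ) ≤ B - A := by nlinarith
    have hNlb : T*ε ≤ (N:ℝ) := by
      have := Nat.sub_one_lt_floor (B - A)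
      have h2 : (N:ℝ) ≤ B - A := Nat.floor_le hBApos
      nlinarith [this]
    have hsubball : ∀ i ∈ Finset.range N,
        ball ((A + (i:ℝ)) • e0) (1/2) ⊆ ⋃ a ∈ Icc A B, ball (a • e0) (1/2) := by
      intro i hi
      have hiN : (i:ℝ) + 1 ≤ N := by exact_mod_cast Finset.mem_range.1 hi
      have hNub : (N:ℝ) ≤ B - A := Nat.floor_le hBApos
      exact subset_biUnion_of_mem (u := fun a => ball (a • e0) (1/2))
        (mem_Icc.2 ⟨by linarith [Nat.cast_nonneg (α := ℝ) i], by linarith⟩)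
    have hdisj : ∀ i ∈ Finset.range N, ∀ k ∈ Finset.range N, i ≠ k →
        Disjoint (ball ((A + (i:ℝ)) • e0) (1/2)) (ball ((A + (k:ℝ)) • e0) (1/2)) := by
      intro i _ k _ hik
      apply ball_disjoint_ball
      rw [dist_eq_norm, show (A + (i:ℝ)) • e0 - (A + (k:ℝ)) • e0 = ((i:ℝ) - k) • e0 by module,
        norm_smul, hn1, mul_one, Real.norm_eq_abs]
      have hz : ((i:ℤ) - k) ≠ 0 := sub_ne_zero.2 (by exact_mod_cast hik)
      have h1 : (1:ℤ) ≤ |(i:ℤ) - k| := Int.one_le_abs hz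
      have : (1:ℝ) ≤ |(i:ℝ) - k| := by exact_mod_cast h1
      linarith
    have hvol : (N:ℝ≥0∞) * v ≤ volume (⋃ a ∈ Icc A B, ball (a • e0) (1/2)) := by
      have heq : volume (⋃ i ∈ Finset.range N, ball ((A + (i:ℝ)) • e0) (1/2))
          = (N:ℝ≥0∞) * v := by
        rw [measure_biUnion_finset hdisj (fun i _ => measurableSet_ball),
          Finset.sum_congr rfl (fun i _ => Measure.addHaar_ball_center volume _ _),
          Finset.sum_const, Finset.card_range, nsmul_eq_mul]
      rw [← heq]
      exact measure_mono (iUnion₂_subset hsubball)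
    have hEmeas : MeasurableSet (⋃ a ∈ Icc A B, ball (a • e0) (1/2)) :=
      (isOpen_biUnion (fun a _ => isOpen_ball)).measurableSet
    -- pointwise bound for lintegral
    have hKpos : (0:ℝ) < (16:ℝ)⁻¹ * T⁻¹ := by positivity
    have hpt : ∀ x ∈ ⋃ a ∈ Icc A B, ball (a • e0) (1/2),
        ENNReal.ofReal (((16:ℝ)⁻¹ * T⁻¹)^p)
          ≤ ENNReal.ofReal ((∫ r in Ioi (0:ℝ), g (r⁻¹ • x - T • e0)) ^ p) := by
      intro x hx
      obtain ⟨hk1, hk2⟩ := key x hx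
      exact ENNReal.ofReal_le_ofReal
        (Real.rpow_le_rpow hKpos.le (le_trans hk2 hk1) hp.le)
    -- the real-number computation
    have hreal : c * (2:ℝ)^((1-p)*(j:ℝ)/2) ≤ ((16:ℝ)⁻¹*T⁻¹)^p * ((N:ℝ) * v.toReal) := by
      have e1 : ((16:ℝ)⁻¹*T⁻¹ : ℝ)^p = (16:ℝ)⁻¹^p * (2:ℝ)^(-(j:ℝ)*p) := by
        rw [hTinv, Real.mul_rpow (by norm_num) (Real.rpow_nonneg (by norm_num) _),
          ← Real.rpow_mul (by norm_num)]
      have e2 : (2:ℝ)^(-(j:ℝ)*p) * (T*ε) = (2:ℝ)^((1-p)*(j:ℝ)/2) := by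
        rw [hTε, ← Real.rpow_add two_pos]
        congr 1; rw [hθ]; ring
      have hrp : (0:ℝ) < (2:ℝ)^(-(j:ℝ)*p) := Real.rpow_pos_of_pos two_pos _
      calc c * (2:ℝ)^((1-p)*(j:ℝ)/2)
          ≤ ((16:ℝ)⁻¹^p * v.toReal) * (2:ℝ)^((1-p)*(j:ℝ)/2) :=
            mul_le_mul_of_nonneg_right (min_le_right _ _)
              (Real.rpow_nonneg (by norm_num) _)
        _ = (16:ℝ)⁻¹^p * (2:ℝ)^(-(j:ℝ)*p) * ((T*ε) * v.toReal) := by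
            rw [← e2]; ring
        _ ≤ (16:ℝ)⁻¹^p * (2:ℝ)^(-(j:ℝ)*p) * ((N:ℝ) * v.toReal) := by
            apply mul_le_mul_of_nonneg_left
              (mul_le_mul_of_nonneg_right hNlb hvR.le) (by positivity)
        _ = ((16:ℝ)⁻¹*T⁻¹)^p * ((N:ℝ) * v.toReal) := by rw [e1]
    calc ENNReal.ofReal (c * (2:ℝ)^((1-p)*(j:ℝ)/2))
        ≤ ENNReal.ofReal (((16:ℝ)⁻¹*T⁻¹)^p) * ((N:ℝ≥0∞) * v) := by
          calc ENNReal.ofReal (c * (2:ℝ)^((1-p)*(j:ℝ)/2))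
              ≤ ENNReal.ofReal (((16:ℝ)⁻¹*T⁻¹)^p * ((N:ℝ) * v.toReal)) :=
                ENNReal.ofReal_le_ofReal hreal
            _ = ENNReal.ofReal (((16:ℝ)⁻¹*T⁻¹)^p) *
                  (ENNReal.ofReal (N:ℝ) * ENNReal.ofReal v.toReal) := by
                rw [ENNReal.ofReal_mul (Real.rpow_nonneg hKpos.le _),
                  ENNReal.ofReal_mul (by positivity)]
            _ = ENNReal.ofReal (((16:ℝ)⁻¹*T⁻¹)^p) * ((N:ℝ≥0∞) * v) := by
                rw [ENNReal.ofReal_toReal hvfin, ENNReal.ofReal_natCast]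
      _ ≤ ENNReal.ofReal (((16:ℝ)⁻¹*T⁻¹)^p) * volume (⋃ a ∈ Icc A B, ball (a • e0) (1/2)) :=
          mul_le_mul_right hvol _
      _ = ∫⁻ _ in ⋃ a ∈ Icc A B, ball (a • e0) (1/2),
            ENNReal.ofReal (((16:ℝ)⁻¹*T⁻¹)^p) := (setLIntegral_const _ _).symm
      _ ≤ ∫⁻ x in ⋃ a ∈ Icc A B, ball (a • e0) (1/2),
            ENNReal.ofReal ((∫ r in Ioi (0:ℝ), g (r⁻¹ • x - T • e0)) ^ p) :=
          setLIntegral_mono' hEmeas hpt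
end

section
/- With the notation of the construction, define the error term H^E g_j(x) := ∫_0^∞ (φ(r) - φ(1)) g_j(x/r) dr, where φ ∈ L^1_{loc}((0,∞)) has Lebesgue point 1 with φ(1) = 1. Then ‖H^E g_j‖_{L^p(E_j)}^p ≤ C ε_j^p 2^{(1-p)j/2} for all sufficiently large j, where ε_j := |A_j|^{-1}∫_{A_j}|φ(r)-φ(1)| dr → 0. -/
open MeasureTheory Filter Set Metric
open scoped ENNReal Topology

/-- Reverse Hölder: for `0 < p < 1`, `∫ F^p ≤ (∫ F)^p μ(univ)^(1-p)`. -/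
private lemma holder_lt_one {α : Type*} [MeasurableSpace α] (μ : Measure α)
    {F : α → ℝ≥0∞} (hF : AEMeasurable F μ) {p : ℝ} (hp : 0 < p) (hp1 : p < 1) :
    ∫⁻ x, F x ^ p ∂μ ≤ (∫⁻ x, F x ∂μ) ^ p * (μ Set.univ) ^ (1 - p) := by
  have hpq : (1/p).HolderConjugate (1/(1-p)) := by
    rw [Real.holderConjugate_iff]; constructor
    · rw [lt_div_iff₀ hp]; linarith
    · rw [one_div, one_div, inv_inv, inv_inv]; ring
  have hFp : AEMeasurable (fun x => F x ^ p) μ :=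
    ENNReal.continuous_rpow_const.measurable.comp_aemeasurable hF
  have h := ENNReal.lintegral_mul_le_Lp_mul_Lq μ hpq hFp
    (aemeasurable_const (b := (1:ℝ≥0∞)))
  have e : ∀ a, (F a ^ p) ^ (1/p) = F a := fun a => by
    rw [← ENNReal.rpow_mul, mul_one_div_cancel hp.ne', ENNReal.rpow_one]
  simp only [Pi.mul_apply, mul_one, ENNReal.one_rpow, lintegral_one,
    one_div_one_div, e] at h
  exact h

set_option maxHeartbeats 1000000 in
/-- Upper bound for the error term `H^E g_j(x) = ∫_0^∞ (φ(r) - φ(1)) g_j(x/r) dr`: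
`‖H^E g_j‖_{L^p(E_j)}^p ≤ C ε_j^p 2^{(1-p)j/2}` for large `j`, where
`ε_j = |A_j|⁻¹ ∫_{A_j} |φ - φ(1)| → 0`. -/
theorem stmt11 (n : ℕ) (hn : 0 < n) (p θ : ℝ) (hp : 0 < p) (hp1 : p < 1)
    (hθ : θ = (1 - p) / 2)
    (e0 : EuclideanSpace ℝ (Fin n)) (he0 : e0 = EuclideanSpace.single ⟨0, hn⟩ 1)
    (E : ℕ → Set (EuclideanSpace ℝ (Fin n)))
    (hE : E = fun (j : ℕ) => ⋃ a ∈ Set.Icc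
        (((2:ℝ)^j + 2) * (1 - (2:ℝ) ^ (-θ * (j:ℝ))) + 1)
        (((2:ℝ)^j - 2) * (1 + (2:ℝ) ^ (-θ * (j:ℝ))) - 1),
      Metric.ball (a • e0) (1/2))
    (g : EuclideanSpace ℝ (Fin n) → ℝ)
    (hg_nonneg : ∀ x, 0 ≤ g x) (hg_smooth : ContDiff ℝ (⊤ : ℕ∞) g)
    (hg_supp : tsupport g ⊆ Metric.ball 0 2)
    (hg_one : ∀ x ∈ Metric.ball (0 : EuclideanSpace ℝ (Fin n)) 1, g x = 1)
    (gj : ℕ → EuclideanSpace ℝ (Fin n) → ℝ)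
    (hgj : gj = fun (j : ℕ) x => g (x - (2:ℝ)^j • e0))
    (φ : ℝ → ℝ)
    (hφ : LocallyIntegrableOn φ (Set.Ioi 0))
    (hφ1 : φ 1 = 1)
    (hleb : Filter.Tendsto
      (fun h : ℝ => (2 * h)⁻¹ * ∫ r in Set.Icc (1 - h) (1 + h), |φ r - φ 1|)
      (𝓝[>] 0) (𝓝 0))
    (ε : ℕ → ℝ)
    (hε : ε = fun (j : ℕ) => (2 * (2:ℝ) ^ (-θ * (j:ℝ)))⁻¹ *
      ∫ r in Set.Icc (1 - (2:ℝ) ^ (-θ * (j:ℝ))) (1 + (2:ℝ) ^ (-θ * (j:ℝ))), |φ r - φ 1|)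
    (HE : ℕ → EuclideanSpace ℝ (Fin n) → ℝ)
    (hHE : HE = fun j x => ∫ r in Set.Ioi (0:ℝ), (φ r - φ 1) * gj j (r⁻¹ • x)) :
    ∃ C : ℝ, 0 < C ∧ ∀ᶠ (j : ℕ) in atTop,
      (∫⁻ x in E j, ENNReal.ofReal (|HE j x| ^ p)) ≤
        ENNReal.ofReal (C * ε j ^ p * (2:ℝ) ^ ((1 - p) * (j:ℝ) / 2)) := by
  have hθpos : 0 < θ := by rw [hθ]; linarith
  have hθ1 : θ < 1 := by rw [hθ]; linarith
  have hg_cont : Continuous g := hg_smooth.continuous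
  have hg_cs : HasCompactSupport g :=
    IsCompact.of_isClosed_subset (isCompact_closedBall (0:EuclideanSpace ℝ (Fin n)) 2)
      (isClosed_tsupport g) (hg_supp.trans ball_subset_closedBall)
  set I : ℝ := ∫ x, g x with hIdef
  have hI : 0 ≤ I := integral_nonneg hg_nonneg
  have hφm : AEMeasurable φ (volume.restrict (Set.Ioi 0)) :=
    (hφ.aestronglyMeasurable).aemeasurable
  set ψ : ℝ → ℝ := hφm.mk φ with hψdef
  have hψm : Measurable ψ := hφm.measurable_mk
  have hψeq : φ =ᵐ[volume.restrict (Set.Ioi 0)] ψ := hφm.ae_eq_mk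
  set B : ℝ≥0∞ := volume (Metric.ball (0:EuclideanSpace ℝ (Fin n)) (3/2)) with hBdef
  have hBfin : B ≠ ⊤ := measure_ball_lt_top.ne
  set B' : ℝ := B.toReal with hB'def
  have hB' : 0 ≤ B' := ENNReal.toReal_nonneg
  set K' : ℝ := (3/2)^n * I with hK'def
  have hK' : 0 ≤ K' := by positivity
  set C₀ : ℝ := (2*K')^p * (2*B')^(1-p) with hC₀def
  have hC₀ : 0 ≤ C₀ :=
    mul_nonneg (Real.rpow_nonneg (by linarith) _) (Real.rpow_nonneg (by linarith) _)
  refine ⟨C₀ + 1, by linarith, ?_⟩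
  -- eventual hypotheses
  have hδ_tendsto : Tendsto (fun j : ℕ => (2:ℝ) ^ (-θ * (j:ℝ))) atTop (𝓝 0) := by
    have hrw : ∀ j : ℕ, (2:ℝ) ^ (-θ * (j:ℝ)) = ((2:ℝ) ^ (-θ)) ^ j := fun j => by
      rw [Real.rpow_mul (by norm_num), Real.rpow_natCast]
    simp only [hrw]
    exact tendsto_pow_atTop_nhds_zero_of_lt_one (Real.rpow_nonneg (by norm_num) _)
      (Real.rpow_lt_one_of_one_lt_of_neg one_lt_two (by linarith))
  have hbig : Tendsto (fun j : ℕ => (2:ℝ)^j * (2:ℝ) ^ (-θ * (j:ℝ))) atTop atTop := by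
    have hrw : ∀ j : ℕ, (2:ℝ)^j * (2:ℝ) ^ (-θ * (j:ℝ)) = ((2:ℝ) ^ (1-θ)) ^ j := fun j => by
      rw [← Real.rpow_natCast 2 j, ← Real.rpow_add two_pos, ← Real.rpow_natCast ((2:ℝ)^(1-θ)) j,
        ← Real.rpow_mul (by norm_num)]
      congr 1; ring
    simp only [hrw]
    apply tendsto_pow_atTop_atTop_of_one_lt
    rw [show (1:ℝ) = (2:ℝ) ^ (0:ℝ) by simp]
    exact Real.rpow_lt_rpow_left_iff one_lt_two |>.mpr (by linarith)
  have ev1 : ∀ᶠ j : ℕ in atTop, (2:ℝ) ^ (-θ * (j:ℝ)) ≤ 1/2 :=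
    hδ_tendsto.eventually (eventually_le_nhds (by norm_num))
  have ev2 : ∀ᶠ j : ℕ in atTop, (4:ℝ) ≤ (2:ℝ)^j :=
    (tendsto_pow_atTop_atTop_of_one_lt one_lt_two).eventually_ge_atTop 4
  have ev3 : ∀ᶠ j : ℕ in atTop, (3:ℝ) ≤ (2:ℝ)^j * (2:ℝ) ^ (-θ * (j:ℝ)) :=
    hbig.eventually_ge_atTop 3
  filter_upwards [ev1, ev2, ev3] with j h1 h2 h3
  set δ : ℝ := (2:ℝ) ^ (-θ * (j:ℝ)) with hδdef
  have hδpos : 0 < δ := Real.rpow_pos_of_pos two_pos _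
  set A : Set ℝ := Set.Icc (1-δ) (1+δ) with hAdef
  have hA_sub : A ⊆ Set.Ioi 0 := fun r hr => by
    simp only [Set.mem_Ioi]; have := hr.1
    linarith [hr.1]
  set cj : EuclideanSpace ℝ (Fin n) := (2:ℝ)^j • e0 with hcjdef
  set a₁ : ℝ := ((2:ℝ)^j + 2) * (1 - δ) + 1 with ha₁def
  set a₂ : ℝ := ((2:ℝ)^j - 2) * (1 + δ) - 1 with ha₂def
  have hEjdef : E j = ⋃ a ∈ Set.Icc a₁ a₂, Metric.ball (a • e0) (1/2) := by
    rw [hE]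
  have hnorm_e0 : ‖e0‖ = 1 := by
    rw [he0, EuclideanSpace.norm_single, norm_one]
  have hεj0 : 0 ≤ ε j := by
    rw [hε]
    exact mul_nonneg (inv_nonneg.2 (by positivity))
      (integral_nonneg fun r => abs_nonneg _)
  -- Step 1: support of r ↦ g(r⁻¹ x - cj) for x ∈ E j
  have hsupp : ∀ x ∈ E j, ∀ r : ℝ, r ∈ Set.Ioi (0:ℝ) →
      g (r⁻¹ • x - cj) ≠ 0 → r ∈ A := by
    intro x hx r hr hg0
    rw [Set.mem_Ioi] at hr
    rw [hEjdef] at hx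
    simp only [Set.mem_iUnion, Metric.mem_ball, exists_prop] at hx
    obtain ⟨a, ha, hxa⟩ := hx
    have hmem : r⁻¹ • x - cj ∈ Metric.ball (0:EuclideanSpace ℝ (Fin n)) 2 :=
      hg_supp (subset_tsupport g (Function.mem_support.2 hg0))
    rw [mem_ball_zero_iff] at hmem
    have hrne : r ≠ 0 := ne_of_gt hr
    have key : ‖x - (r * (2:ℝ)^j) • e0‖ < 2*r := by
      have heq : x - (r * (2:ℝ)^j) • e0 = r • (r⁻¹ • x - cj) := by
        rw [hcjdef, smul_sub, smul_smul, smul_smul, mul_inv_cancel₀ hrne, one_smul]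
      rw [heq, norm_smul, Real.norm_eq_abs, abs_of_pos hr]
      nlinarith
    have habs : |a - r * (2:ℝ)^j| < 1/2 + 2*r := by
      have h₁ : ‖a • e0 - x‖ < 1/2 := by
        rw [dist_comm, dist_eq_norm] at hxa
        exact hxa
      calc |a - r * (2:ℝ)^j| = ‖(a - r * (2:ℝ)^j) • e0‖ := by
            rw [norm_smul, hnorm_e0, mul_one, Real.norm_eq_abs]
        _ = ‖(a • e0 - x) + (x - (r * (2:ℝ)^j) • e0)‖ := by
            congr 1; rw [sub_smul]; abel
        _ ≤ ‖a • e0 - x‖ + ‖x - (r * (2:ℝ)^j) • e0‖ := norm_add_le _ _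
        _ < 1/2 + 2*r := by linarith
    obtain ⟨hb1, hb2⟩ := abs_lt.1 habs
    rw [Set.mem_Icc, ha₁def, ha₂def] at ha
    constructor
    · have h4 : (1-δ) * ((2:ℝ)^j + 2) < r * ((2:ℝ)^j + 2) := by nlinarith [ha.1]
      have hpos2 : (0:ℝ) < (2:ℝ)^j + 2 := by positivity
      exact ((mul_lt_mul_iff_of_pos_right hpos2).mp h4).le
    · have h5 : r * ((2:ℝ)^j - 2) < (1+δ) * ((2:ℝ)^j - 2) := by nlinarith [ha.2]
      have hpos2 : (0:ℝ) < (2:ℝ)^j - 2 := by nlinarith [h2]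
      exact ((mul_lt_mul_iff_of_pos_right hpos2).mp h5).le
  -- Step 2: scaling bound
  have hscale : ∀ r ∈ A, (∫⁻ x, ENNReal.ofReal (g (r⁻¹ • x - cj))) ≤ ENNReal.ofReal K' := by
    intro r hr
    have hr0 : 0 < r := hA_sub hr
    have hrne : r ≠ 0 := ne_of_gt hr0
    have hcont : Continuous fun x : EuclideanSpace ℝ (Fin n) => g (r⁻¹ • x - cj) :=
      hg_cont.comp ((continuous_const_smul _).sub continuous_const)
    have hcs : HasCompactSupport fun x : EuclideanSpace ℝ (Fin n) => g (r⁻¹ • x - cj) := by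
      exact hg_cs.comp_homeomorph
        ((Homeomorph.smulOfNeZero (r⁻¹) (inv_ne_zero hrne)).trans (Homeomorph.subRight cj))
    have hint : Integrable (fun x : EuclideanSpace ℝ (Fin n) => g (r⁻¹ • x - cj)) :=
      hcont.integrable_of_hasCompactSupport hcs
    rw [← ofReal_integral_eq_lintegral_ofReal hint
      (Eventually.of_forall fun x => hg_nonneg _)]
    apply ENNReal.ofReal_le_ofReal
    have hcv : (∫ x, g (r⁻¹ • x - cj)) = |((r⁻¹) ^ n)⁻¹| * ∫ x, g (x - cj) := by
      have h := Measure.integral_comp_smul (μ := volume)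
        (fun y : EuclideanSpace ℝ (Fin n) => g (y - cj)) r⁻¹
      rw [finrank_euclideanSpace_fin] at h
      simpa [smul_eq_mul] using h
    rw [hcv, integral_sub_right_eq_self]
    have habs : |((r⁻¹:ℝ)^n)⁻¹| = r^n := by
      rw [← inv_pow, inv_inv, abs_of_pos (pow_pos hr0 n)]
    rw [habs, hK'def]
    have hr32 : r ≤ 3/2 := by
      have := hr.2; simp only [hAdef, Set.mem_Icc] at hr; linarith [hr.2]
    exact mul_le_mul_of_nonneg_right (pow_le_pow_left₀ hr0.le hr32 n) hI
  -- Step 3: the majorant F and its measurability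
  set f2 : EuclideanSpace ℝ (Fin n) → ℝ → ℝ≥0∞ :=
    fun x r => ENNReal.ofReal |ψ r - 1| * ENNReal.ofReal (g (r⁻¹ • x - cj)) with hf2def
  have hf2meas : Measurable (Function.uncurry f2) := by
    refine Measurable.mul (f := fun q : EuclideanSpace ℝ (Fin n) × ℝ => ENNReal.ofReal |ψ q.2 - 1|)
      (g := fun q => ENNReal.ofReal (g (q.2⁻¹ • q.1 - cj))) ?_ ?_
    · exact (((hψm.comp measurable_snd).sub measurable_const).abs).ennreal_ofReal
    · exact ((hg_cont.measurable.comp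
        ((measurable_snd.inv.smul measurable_fst).sub measurable_const))).ennreal_ofReal
  set F : EuclideanSpace ℝ (Fin n) → ℝ≥0∞ := fun x => ∫⁻ r in A, f2 x r with hFdef
  have hFmeas : Measurable F := hf2meas.lintegral_prod_right'
  -- Step 4: pointwise bound
  have hpt : ∀ x ∈ E j, ENNReal.ofReal |HE j x| ≤ F x := by
    intro x hx
    have hcongr : (∫ r in Set.Ioi (0:ℝ), (φ r - φ 1) * gj j (r⁻¹ • x)) =
        ∫ r in Set.Ioi (0:ℝ), (ψ r - 1) * g (r⁻¹ • x - cj) := by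
      apply integral_congr_ae
      filter_upwards [hψeq] with r hr
      simp only [hgj, hr, hφ1, hcjdef]
    rw [hHE]; simp only; rw [hcongr]
    calc ENNReal.ofReal |∫ r in Set.Ioi (0:ℝ), (ψ r - 1) * g (r⁻¹ • x - cj)|
        = ‖∫ r in Set.Ioi (0:ℝ), (ψ r - 1) * g (r⁻¹ • x - cj)‖ₑ :=
          (Real.enorm_eq_ofReal_abs _).symm
      _ ≤ ∫⁻ r in Set.Ioi (0:ℝ), ‖(ψ r - 1) * g (r⁻¹ • x - cj)‖ₑ :=
          enorm_integral_le_lintegral_enorm _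
      _ = ∫⁻ r in Set.Ioi (0:ℝ), f2 x r := by
          refine lintegral_congr fun r => ?_
          rw [Real.enorm_eq_ofReal_abs, abs_mul, abs_of_nonneg (hg_nonneg _),
            ENNReal.ofReal_mul (abs_nonneg _)]
      _ ≤ ∫⁻ r in Set.Ioi (0:ℝ), A.indicator (f2 x) r := by
          refine setLIntegral_mono' measurableSet_Ioi fun r hr => ?_
          by_cases hrA : r ∈ A
          · rw [Set.indicator_of_mem hrA]
          · rw [Set.indicator_of_notMem hrA]
            have hz : g (r⁻¹ • x - cj) = 0 := by
              by_contra hcon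
              exact hrA (hsupp x hx r hr hcon)
            simp [hf2def, hz]
      _ ≤ ∫⁻ r, A.indicator (f2 x) r := setLIntegral_le_lintegral _ _
      _ = F x := by rw [lintegral_indicator measurableSet_Icc]
  -- Step 5: L¹ bound on F
  have hφint : Integrable (fun r => |φ r - φ 1|) (volume.restrict A) := by
    have h := (hφ.integrableOn_compact_subset hA_sub isCompact_Icc)
    exact (h.sub (integrableOn_const measure_Icc_lt_top.ne)).abs
  have hL1 : (∫⁻ x in E j, F x) ≤ ENNReal.ofReal (2*δ*ε j) * ENNReal.ofReal K' := by
    calc (∫⁻ x in E j, F x) ≤ ∫⁻ x, F x := setLIntegral_le_lintegral _ _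
      _ = ∫⁻ r in A, ∫⁻ x, f2 x r := lintegral_lintegral_swap hf2meas.aemeasurable
      _ = ∫⁻ r in A, ENNReal.ofReal |ψ r - 1| *
            ∫⁻ x, ENNReal.ofReal (g (r⁻¹ • x - cj)) := by
          refine lintegral_congr fun r => ?_
          exact lintegral_const_mul _ ((hg_cont.measurable.comp
            ((measurable_const_smul _).sub measurable_const)).ennreal_ofReal)
      _ ≤ ∫⁻ r in A, ENNReal.ofReal |ψ r - 1| * ENNReal.ofReal K' :=
          setLIntegral_mono' measurableSet_Icc fun r hr =>
            mul_le_mul_right (hscale r hr) _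
      _ = (∫⁻ r in A, ENNReal.ofReal |ψ r - 1|) * ENNReal.ofReal K' :=
          lintegral_mul_const _ (((hψm.sub measurable_const).abs).ennreal_ofReal)
      _ = ENNReal.ofReal (2*δ*ε j) * ENNReal.ofReal K' := by
          congr 1
          have heq : (∫⁻ r in A, ENNReal.ofReal |ψ r - 1|) =
              ∫⁻ r in A, ENNReal.ofReal |φ r - φ 1| := by
            refine lintegral_congr_ae ?_
            filter_upwards [ae_restrict_of_ae_restrict_of_subset hA_sub hψeq] with r hr
            rw [hr, hφ1]
          rw [heq, ← ofReal_integral_eq_lintegral_ofReal hφint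
            (Eventually.of_forall fun r => abs_nonneg _)]
          congr 1
          rw [hε]; simp only [← hδdef, ← hAdef]
          rw [show (2*δ) * ((2*δ)⁻¹ * ∫ r in A, |φ r - φ 1|) = ((2*δ) * (2*δ)⁻¹) *
            ∫ r in A, |φ r - φ 1| by ring, mul_inv_cancel₀ (by positivity), one_mul]
  -- Step 6: volume bound
  have hvol : volume (E j) ≤ ENNReal.ofReal (2 * ((2:ℝ)^j * δ)) * B := by
    set L : ℝ := a₂ - a₁ with hLdef
    have hLval : L = 2 * ((2:ℝ)^j * δ) - 6 := by rw [hLdef, ha₁def, ha₂def]; ring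
    have hL0 : 0 ≤ L := by rw [hLval]; linarith
    set N : ℕ := ⌈L⌉₊ + 1 with hNdef
    have hcover : E j ⊆ ⋃ k ∈ Finset.range N, Metric.ball ((a₁ + (k:ℝ)) • e0) (3/2) := by
      intro x hx
      rw [hEjdef] at hx
      simp only [Set.mem_iUnion, exists_prop] at hx
      obtain ⟨a, ha, hxa⟩ := hx
      have ha0 : 0 ≤ a - a₁ := by linarith [ha.1]
      refine Set.mem_iUnion₂.2 ⟨⌊a - a₁⌋₊, ?_, ?_⟩
      · rw [Finset.mem_range, hNdef]
        have hfl : ⌊a - a₁⌋₊ ≤ ⌊L⌋₊ := Nat.floor_le_floor (by linarith [ha.2])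
        have hfc : ⌊L⌋₊ ≤ ⌈L⌉₊ := Nat.floor_le_ceil L
        omega
      · rw [Metric.mem_ball]
        have hd1 : dist x (a • e0) < 1/2 := hxa
        have hd2 : dist (a • e0) ((a₁ + (⌊a - a₁⌋₊:ℝ)) • e0) < 1 := by
          rw [dist_eq_norm, ← sub_smul, norm_smul, hnorm_e0, mul_one, Real.norm_eq_abs,
            abs_lt]
          constructor
          · linarith [Nat.floor_le ha0]
          · linarith [Nat.lt_floor_add_one (a - a₁)]
        calc dist x ((a₁ + (⌊a - a₁⌋₊:ℝ)) • e0)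
            ≤ dist x (a • e0) + dist (a • e0) ((a₁ + (⌊a - a₁⌋₊:ℝ)) • e0) :=
              dist_triangle _ _ _
          _ < 3/2 := by linarith
    calc volume (E j)
        ≤ volume (⋃ k ∈ Finset.range N, Metric.ball ((a₁ + (k:ℝ)) • e0) (3/2)) :=
          measure_mono hcover
      _ ≤ ∑ k ∈ Finset.range N, volume (Metric.ball ((a₁ + (k:ℝ)) • e0) (3/2)) :=
          measure_biUnion_finset_le _ _
      _ = (N : ℝ≥0∞) * B := by
          have hb : ∀ k : ℕ, volume (Metric.ball ((a₁ + (k:ℝ)) • e0) (3/2)) = B :=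
            fun k => Measure.addHaar_ball_center volume _ _
          simp only [hb, Finset.sum_const, Finset.card_range, nsmul_eq_mul]
      _ ≤ ENNReal.ofReal (2 * ((2:ℝ)^j * δ)) * B := by
          apply mul_le_mul_left
          rw [← ENNReal.ofReal_natCast]
          apply ENNReal.ofReal_le_ofReal
          have hcl : (⌈L⌉₊:ℝ) < L + 1 := Nat.ceil_lt_add_one hL0
          rw [hNdef]
          push_cast
          linarith [hcl, hLval]
  -- Step 7: exponent identity
  have hexp : δ ^ p * ((2:ℝ)^j * δ) ^ (1-p) = (2:ℝ) ^ ((1-p)*(j:ℝ)/2) := by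
    have h2j : (2:ℝ)^j * δ = (2:ℝ) ^ ((1-θ)*(j:ℝ)) := by
      rw [hδdef, ← Real.rpow_natCast 2 j, ← Real.rpow_add two_pos]
      congr 1; ring
    rw [h2j, hδdef, ← Real.rpow_mul (by norm_num : (0:ℝ) ≤ 2),
      ← Real.rpow_mul (by norm_num : (0:ℝ) ≤ 2),
      ← Real.rpow_add two_pos]
    congr 1
    rw [hθ]; ring
  -- Final assembly
  have hEmeas : MeasurableSet (E j) := by
    rw [hEjdef]
    exact (isOpen_biUnion fun a _ => isOpen_ball).measurableSet
  calc (∫⁻ x in E j, ENNReal.ofReal (|HE j x| ^ p))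
      = ∫⁻ x in E j, ENNReal.ofReal |HE j x| ^ p :=
        lintegral_congr fun x => (ENNReal.ofReal_rpow_of_nonneg (abs_nonneg _) hp.le).symm
    _ ≤ ∫⁻ x in E j, F x ^ p :=
        setLIntegral_mono' hEmeas fun x hx => ENNReal.rpow_le_rpow (hpt x hx) hp.le
    _ ≤ (∫⁻ x in E j, F x) ^ p * ((volume.restrict (E j)) Set.univ) ^ (1-p) :=
        holder_lt_one _ hFmeas.aemeasurable hp hp1
    _ ≤ (ENNReal.ofReal (2*δ*ε j) * ENNReal.ofReal K') ^ p *
        (ENNReal.ofReal (2 * ((2:ℝ)^j * δ)) * B) ^ (1-p) := by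
        apply mul_le_mul'
        · exact ENNReal.rpow_le_rpow hL1 hp.le
        · refine ENNReal.rpow_le_rpow ?_ (by linarith)
          rw [Measure.restrict_apply_univ]; exact hvol
    _ ≤ ENNReal.ofReal ((C₀ + 1) * ε j ^ p * (2:ℝ) ^ ((1 - p) * (j:ℝ) / 2)) := by
        have h2δε : (0:ℝ) ≤ 2*δ*ε j := mul_nonneg (mul_nonneg zero_le_two hδpos.le) hεj0
        have hp2j : (0:ℝ) ≤ (2:ℝ)^j := by positivity
        have h2jδ : (0:ℝ) ≤ 2*((2:ℝ)^j*δ) :=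
          mul_nonneg zero_le_two (mul_nonneg hp2j hδpos.le)
        rw [← ENNReal.ofReal_toReal hBfin, ← hB'def,
          ← ENNReal.ofReal_mul h2δε, ← ENNReal.ofReal_mul h2jδ,
          ENNReal.ofReal_rpow_of_nonneg (mul_nonneg h2δε hK') hp.le,
          ENNReal.ofReal_rpow_of_nonneg (mul_nonneg h2jδ hB')
            (by linarith : (0:ℝ) ≤ 1-p),
          ← ENNReal.ofReal_mul (Real.rpow_nonneg (mul_nonneg h2δε hK') _)]
        apply ENNReal.ofReal_le_ofReal
        have hsplit : (2*δ*ε j*K')^p * (2*((2:ℝ)^j*δ)*B')^(1-p) =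
            C₀ * (ε j ^ p * (2:ℝ) ^ ((1-p)*(j:ℝ)/2)) := by
          have h2K' : (0:ℝ) ≤ 2*K' := by linarith
          have h2B' : (0:ℝ) ≤ 2*B' := by linarith
          have hbase : (0:ℝ) ≤ (2:ℝ)^j*δ := mul_nonneg hp2j hδpos.le
          have e1 : (2*δ*ε j*K')^p = (2*K')^p * (ε j^p * δ^p) := by
            rw [show 2*δ*ε j*K' = (2*K') * (ε j * δ) by ring,
              Real.mul_rpow h2K' (mul_nonneg hεj0 hδpos.le),
              Real.mul_rpow hεj0 hδpos.le]
          have e2 : (2*((2:ℝ)^j*δ)*B')^(1-p) = (2*B')^(1-p) * ((2:ℝ)^j*δ)^(1-p) := by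
            rw [show 2*((2:ℝ)^j*δ)*B' = (2*B') * ((2:ℝ)^j*δ) by ring,
              Real.mul_rpow h2B' hbase]
          rw [e1, e2, hC₀def]
          linear_combination ((2*K')^p * ε j ^ p * (2*B')^(1-p)) * hexp
        rw [hsplit]
        have hXnn : 0 ≤ ε j ^ p * (2:ℝ) ^ ((1-p)*(j:ℝ)/2) :=
          mul_nonneg (Real.rpow_nonneg hεj0 _) (Real.rpow_nonneg (by norm_num) _)
        nlinarith [hXnn]
end
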